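/- Let f be a transcendental entire function, ε ∈ (0,1), and μ(r) = ε·M(r). Suppose R > 0 is such that μ(r) > r for r ≥ R. If z satisfies |f^{n+L}(z)| ≥ μ^n(R) for some L ∈ ℕ and all n ∈ ℕ, then z ∈ A(f). Conversely every z ∈ A(f) satisfies such an inequality. Hence A(f) = {z : ∃ L ∈ ℕ such that |f^{n+L}(z)| ≥ μ^n(R) for all n ∈ ℕ}. -/

import Mathlib

open Complex Filter Set Function

noncomputable def maxMod (f : ℂ → ℂ) (r : ℝ) : ℝ :=
  sSup ((fun z => ‖f z‖) '' {z : ℂ | ‖z‖ = r})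

def TranscendentalEntire (f : ℂ → ℂ) : Prop :=
  Differentiable ℂ f ∧ ¬ ∃ p : Polynomial ℂ, ∀ z, f z = p.eval z

noncomputable def ALevel (f : ℂ → ℂ) (R : ℝ) (L : ℤ) : Set ℂ :=
  {z : ℂ | ∀ n : ℕ, 0 ≤ (n : ℤ) + L →
    ‖f^[n] z‖ ≥ (maxMod f)^[((n : ℤ) + L).toNat] R}

noncomputable def Afast (f : ℂ → ℂ) (R : ℝ) : Set ℂ :=
  ⋃ L : ℕ, ALevel f R (-(L : ℤ))

/-!
Membership in either set means that the orbit of `z` eventually dominates, up to a shift of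
index, a fixed real orbit: that of `R'` under `M` or that of `R` under `μ = ε M`. So it suffices
that each real orbit is dominated by a shift of the other. Both tend to infinity, because `M` is
continuous and a bounded monotone orbit would converge to a fixed point. As `μ ≤ M`, the
`μ`-orbit lies below a shifted `M`-orbit. Conversely, for transcendental `f` the Taylor expansion
gives `M(εr) ≤ ε² M(r)` for large `r` (the polynomial head is `o(M)` and Cauchy's estimate
bounds the tail), which makes `ε` times a late stretch of the `μ`-orbit dominate the `M`-orbit.
-/

open Asymptotics

section maxMod

variable {f : ℂ → ℂ}

lemma setOf_norm_eq_sphere (r : ℝ) : {z : ℂ | ‖z‖ = r} = Metric.sphere 0 r := by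
  ext z
  simp

lemma maxMod_of_neg {r : ℝ} (hr : r < 0) : maxMod f r = 0 := by
  simp [maxMod, setOf_norm_eq_sphere, Metric.sphere_eq_empty_of_neg hr]

lemma maxMod_nonneg (r : ℝ) : 0 ≤ maxMod f r :=
  Real.sSup_nonneg <| forall_mem_image.2 fun _ _ ↦ norm_nonneg _

lemma norm_le_maxMod (hf : Continuous f) {z : ℂ} {r : ℝ} (hz : ‖z‖ = r) :
    ‖f z‖ ≤ maxMod f r := by
  refine le_csSup ?_ ⟨z, hz, rfl⟩
  rw [setOf_norm_eq_sphere]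
  exact (isCompact_sphere 0 r).bddAbove_image (by fun_prop)

lemma maxMod_le {r C : ℝ} (hr : 0 ≤ r) (h : ∀ z : ℂ, ‖z‖ = r → ‖f z‖ ≤ C) :
    maxMod f r ≤ C :=
  csSup_le (Nonempty.image _ ⟨r, by simp [abs_of_nonneg hr]⟩) (forall_mem_image.2 h)

lemma norm_le_maxMod_of_norm_le (hf : Differentiable ℂ f) {z : ℂ} {r : ℝ} (hz : ‖z‖ ≤ r) :
    ‖f z‖ ≤ maxMod f r := by
  refine Complex.norm_le_of_forall_mem_frontier_norm_le (U := Metric.closedBall 0 r)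
    Metric.isBounded_closedBall hf.diffContOnCl (fun w hw ↦ ?_) ?_
  · rw [frontier_closedBall'] at hw
    exact norm_le_maxMod hf.continuous (mem_sphere_zero_iff_norm.1 hw)
  · simpa [Metric.closure_closedBall] using hz

lemma monotone_maxMod (hf : Differentiable ℂ f) : Monotone (maxMod f) := by
  intro r s hrs
  rcases lt_or_ge r 0 with hr | hr
  · exact (maxMod_of_neg hr).trans_le (maxMod_nonneg s)
  · exact maxMod_le hr fun z hz ↦ norm_le_maxMod_of_norm_le hf (hz.trans_le hrs)

/-- Rescaling the circle of radius `r` to the unit circle makes the compact set independent of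
`r`, so that continuity follows from `IsCompact.continuous_sSup`. -/
lemma continuousAt_maxMod (hf : Continuous f) {r : ℝ} (hr : 0 < r) :
    ContinuousAt (maxMod f) r := by
  have hunit : Continuous fun s : ℝ ↦ sSup ((fun w ↦ ‖f (s * w)‖) '' Metric.sphere 0 1) :=
    (isCompact_sphere (0 : ℂ) 1).continuous_sSup (by fun_prop)
  refine hunit.continuousAt.congr (eventually_of_mem (Ioi_mem_nhds hr) fun s (hs : 0 < s) ↦ ?_)
  have hsphere : (fun w : ℂ ↦ (s : ℂ) * w) '' Metric.sphere 0 1 = {z : ℂ | ‖z‖ = s} := by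
    ext z
    refine ⟨?_, fun hz ↦ ⟨z / s, ?_, ?_⟩⟩
    · rintro ⟨w, hw, rfl⟩
      simp_all [abs_of_pos hs]
    · simp_all [abs_of_pos hs, hs.ne']
    · field_simp [ofReal_ne_zero.2 hs.ne']
  rw [maxMod, ← hsphere, image_image]

end maxMod

lemma tendsto_iterate_atTop_of_lt {g : ℝ → ℝ} {a : ℝ} (hlt : ∀ r ≥ a, r < g r)
    (hcont : ∀ r ≥ a, ContinuousAt g r) : Tendsto (fun n ↦ g^[n] a) atTop atTop := by
  have hmaps : MapsTo g (Ici a) (Ici a) := fun r hr ↦ hr.trans (hlt r hr).le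
  have horbit : ∀ n, a ≤ g^[n] a := fun n ↦ hmaps.iterate n self_mem_Ici
  have hmono : Monotone fun n ↦ g^[n] a := monotone_nat_of_le_succ fun n ↦ by
    rw [iterate_succ_apply']
    exact (hlt _ (horbit n)).le
  refine (tendsto_atTop_of_monotone hmono).resolve_right ?_
  rintro ⟨l, hl⟩
  have hal : a ≤ l := ge_of_tendsto' hl horbit
  exact (hlt l hal).ne' (isFixedPt_of_tendsto_iterate hl (hcont l hal))

section taylor

open Nat

variable {f : ℂ → ℂ}

noncomputable def taylorCoeff (f : ℂ → ℂ) (n : ℕ) : ℂ := (n ! : ℂ)⁻¹ * iteratedDeriv n f 0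

lemma hasSum_taylorCoeff_mul_pow (hf : Differentiable ℂ f) (z : ℂ) :
    HasSum (fun n ↦ taylorCoeff f n * z ^ n) (f z) := by
  have htaylor := Complex.hasSum_taylorSeries_of_entire hf 0 z
  simp only [sub_zero, smul_eq_mul] at htaylor
  exact htaylor.congr_fun fun n ↦ by rw [taylorCoeff]; ring

lemma norm_taylorCoeff_mul_pow_le_maxMod (hf : Differentiable ℂ f) {r : ℝ} (hr : 0 < r)
    (n : ℕ) : ‖taylorCoeff f n‖ * r ^ n ≤ maxMod f r := by
  have hcauchy := Complex.norm_iteratedDeriv_le_of_forall_mem_sphere_norm_le n hr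
    hf.diffContOnCl fun z hz ↦ norm_le_maxMod hf.continuous (mem_sphere_zero_iff_norm.1 hz)
  have hfact : (0 : ℝ) < n ! := mod_cast factorial_pos n
  rw [taylorCoeff, norm_mul, norm_inv, norm_natCast]
  calc (n ! : ℝ)⁻¹ * ‖iteratedDeriv n f 0‖ * r ^ n
      ≤ (n ! : ℝ)⁻¹ * (n ! * maxMod f r / r ^ n) * r ^ n := by gcongr
    _ = maxMod f r := by field_simp

lemma exists_taylorCoeff_ne_zero (hf : TranscendentalEntire f) (N : ℕ) :
    ∃ m, N ≤ m ∧ taylorCoeff f m ≠ 0 := by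
  by_contra! hzero
  refine hf.2 ⟨∑ n ∈ Finset.range N, Polynomial.C (taylorCoeff f n) * Polynomial.X ^ n,
    fun z ↦ ?_⟩
  rw [← (hasSum_taylorCoeff_mul_pow hf.1 z).tsum_eq,
    tsum_eq_sum (s := Finset.range N) fun n hn ↦ by simp [hzero n (by simpa using hn)]]
  simp [Polynomial.eval_finsetSum]

lemma isLittleO_pow_maxMod (hf : TranscendentalEntire f) (n : ℕ) :
    (fun r : ℝ ↦ r ^ n) =o[atTop] maxMod f := by
  obtain ⟨m, hnm, hm⟩ := exists_taylorCoeff_ne_zero hf (n + 1)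
  have hpow_maxMod : (fun r : ℝ ↦ r ^ m) =O[atTop] maxMod f := by
    refine IsBigO.of_bound ‖taylorCoeff f m‖⁻¹ ?_
    filter_upwards [eventually_gt_atTop 0] with r hr
    rw [norm_pow, Real.norm_of_nonneg hr.le, Real.norm_of_nonneg (maxMod_nonneg r),
      le_inv_mul_iff₀ (norm_pos_iff.2 hm)]
    exact norm_taylorCoeff_mul_pow_le_maxMod hf.1 hr m
  exact (isLittleO_pow_pow_atTop_of_lt (by omega)).trans_isBigO hpow_maxMod

/-- By Cauchy's estimate `|aₙ| rⁿ ≤ M(r)`, the Taylor tail from index `N` on `|z| = εr` is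
dominated by a geometric series. -/
lemma maxMod_mul_le {ε r : ℝ} (hf : Differentiable ℂ f) (hε0 : 0 ≤ ε) (hε1 : ε < 1)
    (hr : 0 < r) (N : ℕ) :
    maxMod f (ε * r) ≤ ∑ n ∈ Finset.range N, ‖taylorCoeff f n‖ * (ε * r) ^ n
      + ε ^ N / (1 - ε) * maxMod f r := by
  set g : ℕ → ℝ := fun n ↦ ‖taylorCoeff f n‖ * (ε * r) ^ n
  have hg_le : ∀ n, g n ≤ ε ^ n * maxMod f r := fun n ↦ by
    calc g n = ε ^ n * (‖taylorCoeff f n‖ * r ^ n) := by simp only [g]; ring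
      _ ≤ ε ^ n * maxMod f r := by gcongr; exact norm_taylorCoeff_mul_pow_le_maxMod hf hr n
  have hgeom : Summable fun n ↦ ε ^ n * maxMod f r :=
    (summable_geometric_of_lt_one hε0 hε1).mul_right _
  have hg : Summable g := hgeom.of_nonneg_of_le (fun n ↦ by positivity) hg_le
  have htail : ∑' n, g (n + N) ≤ ε ^ N / (1 - ε) * maxMod f r := by
    calc ∑' n, g (n + N) ≤ ∑' n, ε ^ (n + N) * maxMod f r :=
          ((summable_nat_add_iff N).2 hg).tsum_le_tsum (fun n ↦ hg_le _)
            ((summable_nat_add_iff N).2 hgeom)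
      _ = ε ^ N / (1 - ε) * maxMod f r := by
          simp_rw [pow_add, mul_comm (ε ^ _) (ε ^ N), mul_assoc, tsum_mul_left, tsum_mul_right,
            tsum_geometric_of_lt_one hε0 hε1]
          ring
  refine maxMod_le (by positivity) fun z hz ↦ ?_
  calc ‖f z‖ ≤ ∑' n, g n :=
        (hasSum_taylorCoeff_mul_pow hf z).norm_le_of_bounded hg.hasSum fun n ↦ by
          simp [g, hz]
    _ = ∑ n ∈ Finset.range N, g n + ∑' n, g (n + N) := (hg.sum_add_tsum_nat_add N).symm
    _ ≤ _ := by gcongr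

lemma eventually_maxMod_mul_le (hf : TranscendentalEntire f) {ε δ : ℝ} (hε0 : 0 ≤ ε)
    (hε1 : ε < 1) (hδ : 0 < δ) : ∀ᶠ r in atTop, maxMod f (ε * r) ≤ δ * maxMod f r := by
  obtain ⟨N, hN⟩ : ∃ N : ℕ, ε ^ N / (1 - ε) < δ / 2 :=
    (((tendsto_pow_atTop_nhds_zero_of_lt_one hε0 hε1).div_const (1 - ε)).eventually
      (gt_mem_nhds (by simpa using half_pos hδ))).exists
  have hhead : (fun r : ℝ ↦ ∑ n ∈ Finset.range N, ‖taylorCoeff f n‖ * (ε * r) ^ n)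
      =o[atTop] maxMod f :=
    IsLittleO.fun_sum fun n _ ↦ by
      simpa only [mul_pow, ← mul_assoc] using
        (isLittleO_pow_maxMod hf n).const_mul_left (‖taylorCoeff f n‖ * ε ^ n)
  filter_upwards [hhead.bound (half_pos hδ), eventually_gt_atTop 0] with r hbound hr
  rw [Real.norm_of_nonneg (by positivity), Real.norm_of_nonneg (maxMod_nonneg r)] at hbound
  calc maxMod f (ε * r)
      ≤ ∑ n ∈ Finset.range N, ‖taylorCoeff f n‖ * (ε * r) ^ n
        + ε ^ N / (1 - ε) * maxMod f r := maxMod_mul_le hf.1 hε0 hε1 hr N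
    _ ≤ δ / 2 * maxMod f r + δ / 2 * maxMod f r := by
        gcongr
        · exact maxMod_nonneg r
    _ = δ * maxMod f r := by ring

end taylor

lemma iterate_le_iterate_add {α : Type*} [Preorder α] {g h : α → α} (hh : Monotone h)
    (hgh : g ≤ h) {a b : α} {k : ℕ} (hab : a ≤ h^[k] b) (n : ℕ) : g^[n] a ≤ h^[n + k] b :=
  calc g^[n] a ≤ h^[n] a := hh.le_iterate_of_le hgh n a
    _ ≤ h^[n] (h^[k] b) := hh.iterate n hab
    _ = h^[n + k] b := (iterate_add_apply h n k b).symm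

section orbits

variable {f : ℂ → ℂ} {ε : ℝ}

lemma exists_iterate_mul_maxMod_le_iterate_maxMod (hf : Differentiable ℂ f) (hε : ε ≤ 1)
    {R R' : ℝ} (hR' : 0 < R') (hM : ∀ r ≥ R', r < maxMod f r) :
    ∃ k, ∀ n, (fun r ↦ ε * maxMod f r)^[n] R ≤ (maxMod f)^[n + k] R' := by
  have hM_orbit : Tendsto (fun n ↦ (maxMod f)^[n] R') atTop atTop :=
    tendsto_iterate_atTop_of_lt hM fun _ hr ↦ continuousAt_maxMod hf.continuous (hR'.trans_le hr)
  obtain ⟨k, hk⟩ := (hM_orbit.eventually_ge_atTop R).exists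
  exact ⟨k, iterate_le_iterate_add (monotone_maxMod hf)
    (fun r ↦ mul_le_of_le_one_left (maxMod_nonneg r) hε) hk⟩

/-- Once the `μ`-orbit is past the point from which `M(εr) ≤ ε² M(r)`, that inequality reads
`M (ε x) ≤ ε μ(x)`, so `ε` times the `μ`-orbit stays above the `M`-orbit. -/
lemma exists_iterate_maxMod_le_iterate_mul_maxMod (hf : TranscendentalEntire f)
    (hε : ε ∈ Ioo 0 1) {R R' : ℝ} (hR : 0 < R) (hμ : ∀ r ≥ R, r < ε * maxMod f r) :
    ∃ k, ∀ n, (maxMod f)^[n] R' ≤ (fun r ↦ ε * maxMod f r)^[n + k] R := by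
  set μ : ℝ → ℝ := fun r ↦ ε * maxMod f r
  obtain ⟨U, hU⟩ := eventually_atTop.1
    (eventually_maxMod_mul_le hf hε.1.le hε.2 (pow_pos hε.1 2))
  have hμ_orbit : Tendsto (fun n ↦ μ^[n] R) atTop atTop :=
    tendsto_iterate_atTop_of_lt hμ fun _ hr ↦
      continuousAt_const.mul (continuousAt_maxMod hf.1.continuous (hR.trans_le hr))
  obtain ⟨k, hk⟩ := eventually_atTop.1 ((hμ_orbit.eventually_ge_atTop U).and
    ((hμ_orbit.eventually_ge_atTop (R' / ε)).and (hμ_orbit.eventually_ge_atTop 0)))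
  refine ⟨k, fun n ↦ ?_⟩
  have hscaled : (maxMod f)^[n] R' ≤ ε * μ^[n + k] R := by
    refine (monotone_maxMod hf.1).seq_le_seq (x := fun m ↦ (maxMod f)^[m] R')
      (y := fun m ↦ ε * μ^[m + k] R) n ?_ (fun m _ ↦ by rw [iterate_succ_apply']) ?_
    · simpa [div_le_iff₀' hε.1] using (hk k le_rfl).2.1
    · intro m _
      rw [show m + 1 + k = (m + k) + 1 by omega, iterate_succ_apply']
      calc maxMod f (ε * μ^[m + k] R) ≤ ε ^ 2 * maxMod f (μ^[m + k] R) :=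
            hU _ (hk _ (by omega)).1
        _ = ε * μ (μ^[m + k] R) := by simp only [μ]; ring
  exact hscaled.trans (mul_le_of_le_one_left (hk _ (by omega)).2.2 hε.2.le)

end orbits

def fastEscapingSet (f : ℂ → ℂ) (g : ℝ → ℝ) (a : ℝ) : Set ℂ :=
  {z | ∃ L : ℕ, ∀ n : ℕ, ‖f^[n + L] z‖ ≥ g^[n] a}

lemma Afast_eq_fastEscapingSet (f : ℂ → ℂ) (R : ℝ) :
    Afast f R = fastEscapingSet f (maxMod f) R := by
  ext z
  simp only [Afast, ALevel, fastEscapingSet, mem_iUnion, mem_ofPred_eq]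
  refine exists_congr fun L ↦ ⟨fun hz n ↦ ?_, fun hz n hn ↦ ?_⟩
  · simpa using hz (n + L) (by omega)
  · obtain ⟨m, rfl⟩ : ∃ m, n = m + L := ⟨n - L, by omega⟩
    simpa using hz m

lemma fastEscapingSet_subset_of_iterate_le {f : ℂ → ℂ} {g g' : ℝ → ℝ} {a a' : ℝ} {k : ℕ}
    (h : ∀ n, g^[n] a ≤ g'^[n + k] a') : fastEscapingSet f g' a' ⊆ fastEscapingSet f g a := by
  rintro z ⟨L, hz⟩
  refine ⟨k + L, fun n ↦ ?_⟩
  rw [← add_assoc]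
  exact (h n).trans (hz (n + k))

theorem Afast_eq_mu_description (f : ℂ → ℂ) (hf : TranscendentalEntire f)
    (ε : ℝ) (hε : ε ∈ Set.Ioo (0 : ℝ) 1)
    (R : ℝ) (hR : 0 < R) (hμ : ∀ r ≥ R, ε * maxMod f r > r)
    (R' : ℝ) (hR' : 0 < R') (hM : ∀ r ≥ R', maxMod f r > r) :
    Afast f R' = {z : ℂ | ∃ L : ℕ, ∀ n : ℕ,
      ‖f^[n + L] z‖ ≥ (fun r => ε * maxMod f r)^[n] R} := by
  obtain ⟨k, hk⟩ := exists_iterate_mul_maxMod_le_iterate_maxMod (R := R) hf.1 hε.2.le hR' hM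
  obtain ⟨k', hk'⟩ := exists_iterate_maxMod_le_iterate_mul_maxMod (R' := R') hf hε hR hμ
  rw [Afast_eq_fastEscapingSet]
  exact (fastEscapingSet_subset_of_iterate_le hk).antisymm
    (fastEscapingSet_subset_of_iterate_le hk')
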